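/- arXiv:1610.07048 — 2 statements merged into one kernel-verified Lean document; each statement's English description precedes it below -/
import Mathlib

section
/- Let (U,d) be a metric space, X = {z_1,...,z_n} ⊆ U, and define the fill distance h = sup_{u∈U} inf_{z∈X} d(u,z). Under the hypotheses of the localized error bound (partition of unity weights g_i supported in balls B(z_i, δ), local Taylor bounds |f(u) − T_i(u)| ≤ C_i d(u,z_i)^{q+1}), if δ = K·h with K ≥ 1, then |f(u) − H(u)| ≤ C K^{q+1} h^{q+1} for all u ∈ U, where H(u) = ∑_i T_i(u) g_i(u) and C = max_i C_i. -/
open Finset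

theorem fill_distance_error_bound
    {U : Type*} [MetricSpace U] [Nonempty U] {n : ℕ} (hn : 0 < n)
    (z : Fin n → U) (h : ℝ)
    (hh : h = ⨆ u : U, ⨅ i : Fin n, dist u (z i))
    (K : ℝ) (hK : 1 ≤ K) (δ : ℝ) (hδ : δ = K * h)
    (g T : Fin n → U → ℝ) (f : U → ℝ)
    (hg0 : ∀ i u, 0 ≤ g i u) (hg1 : ∀ u, ∑ i, g i u = 1)
    (hsupp : ∀ i u, δ ≤ dist u (z i) → g i u = 0)
    (Cs : Fin n → ℝ) (hCs : ∀ i, 0 ≤ Cs i) (q : ℕ)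
    (hT : ∀ i u, |f u - T i u| ≤ Cs i * dist u (z i) ^ (q + 1))
    (H : U → ℝ) (hH : ∀ u, H u = ∑ i, T i u * g i u)
    (C : ℝ) (hC : C = univ.sup' (univ_nonempty_iff.mpr ⟨⟨0, hn⟩⟩) Cs) :
    ∀ u, |f u - H u| ≤ C * K ^ (q + 1) * h ^ (q + 1) := by
  intro u
  have hh0 : 0 ≤ h := by
    rw [hh]
    exact Real.iSup_nonneg fun v => Real.iInf_nonneg fun i => dist_nonneg
  have hδ0 : 0 ≤ δ := by
    rw [hδ]; exact mul_nonneg (le_trans zero_le_one hK) hh0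
  have hCnn : ∀ i, Cs i ≤ C := fun i => hC ▸ Finset.le_sup' Cs (mem_univ i)
  have hC0 : 0 ≤ C := le_trans (hCs ⟨0, hn⟩) (hCnn _)
  have key : ∀ i, |f u - T i u| * g i u ≤ C * δ ^ (q + 1) * g i u := by
    intro i
    by_cases hgi : g i u = 0
    · simp [hgi]
    · have hd : dist u (z i) < δ := by
        by_contra hle
        exact hgi (hsupp i u (not_lt.mp hle))
      calc |f u - T i u| * g i u
          ≤ (Cs i * dist u (z i) ^ (q + 1)) * g i u :=
            mul_le_mul_of_nonneg_right (hT i u) (hg0 i u)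
        _ ≤ (C * δ ^ (q + 1)) * g i u := by
            apply mul_le_mul_of_nonneg_right _ (hg0 i u)
            exact mul_le_mul (hCnn i) (pow_le_pow_left₀ dist_nonneg hd.le _)
              (by positivity) hC0
  have h1 : f u - H u = ∑ i, (f u - T i u) * g i u := by
    simp only [sub_mul, Finset.sum_sub_distrib, ← Finset.mul_sum, hg1, mul_one, hH]
  calc |f u - H u| ≤ ∑ i, |f u - T i u| * g i u := by
        rw [h1]
        refine (Finset.abs_sum_le_sum_abs _ _).trans ?_
        apply Finset.sum_le_sum
        intro i _
        rw [abs_mul, abs_of_nonneg (hg0 i u)]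
    _ ≤ ∑ i, C * δ ^ (q + 1) * g i u := Finset.sum_le_sum fun i _ => key i
    _ = C * δ ^ (q + 1) := by rw [← Finset.mul_sum, hg1, mul_one]
    _ = C * K ^ (q + 1) * h ^ (q + 1) := by rw [hδ, mul_pow, mul_assoc]
end

section
/- Let α_j : ℝ^m → ℝ (j = 1,...,n) be k-times continuously differentiable functions with α_j(u) ≥ 0, α_j(z_j) = 0, α_j(u) > 0 for u ≠ z_j, and D^β α_j(z_j) = 0 for all multi-indices β with 0 < |β| ≤ k, where z_1,...,z_n are distinct points. Then each cardinal function g_i(u) = (∏_{j≠i} α_j(u))/(∑_{k'=1}^n ∏_{j≠k'} α_j(u)) is k-times continuously differentiable in a neighborhood of each node z_l, and D^β g_i(z_l) = 0 for all 0 < |β| ≤ k and all i, l. -/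
/-!
The denominator `∑ₖ ∏_{j ≠ k} αⱼ` never vanishes, since at any point at most one `αⱼ` does,
so every cardinal function `gᵢ` is `C^k`. For `i ≠ l` the numerator of `gᵢ` contains the
factor `α_l`, which is flat to order `k` at `z_l`; by the Leibniz rule every derivative of
order `≤ k` of `gᵢ = α_l · (C^k function)` vanishes at `z_l`. The cardinal functions sum
to `1`, so the remaining case `i = l` follows from `g_l = 1 - ∑_{i ≠ l} gᵢ`.
-/

open Finset

section Calculus

variable {𝕜 E : Type*} [NontriviallyNormedField 𝕜] [NormedAddCommGroup E] [NormedSpace 𝕜 E]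

theorem iteratedFDeriv_mul_eq_zero_of_flat {A : Type*} [NormedRing A] [NormedAlgebra 𝕜 A]
    {f g : E → A} {n : ℕ} (hf : ContDiff 𝕜 n f) (hg : ContDiff 𝕜 n g) {x : E}
    (hflat : ∀ i ≤ n, iteratedFDeriv 𝕜 i f x = 0) :
    iteratedFDeriv 𝕜 n (fun y => f y * g y) x = 0 := by
  refine norm_le_zero_iff.mp ((norm_iteratedFDeriv_mul_le hf hg x le_rfl).trans_eq ?_)
  refine sum_eq_zero fun i hi => ?_
  rw [hflat i (Nat.lt_succ_iff.mp (mem_range.mp hi)), norm_zero, mul_zero, zero_mul]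

theorem iteratedFDeriv_eq_zero_of_sum_eq_const {ι F : Type*} [Fintype ι]
    [NormedAddCommGroup F] [NormedSpace 𝕜 F] {g : ι → E → F} {c : F} {n : ℕ} (hn : n ≠ 0)
    (hg : ∀ j, ContDiff 𝕜 n (g j)) (hsum : ∀ y, ∑ j, g j y = c) {x : E} {l : ι}
    (hother : ∀ j ≠ l, iteratedFDeriv 𝕜 n (g j) x = 0) :
    iteratedFDeriv 𝕜 n (g l) x = 0 := by
  have hconst : (fun y => ∑ j, g j y) = fun _ => c := funext hsum
  have htotal := congrFun (iteratedFDeriv_sum (u := univ) fun j _ => hg j) x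
  rw [hconst, iteratedFDeriv_const_of_ne hn, Finset.sum_apply,
    sum_eq_single l (fun j _ hj => hother j hj) (by simp)] at htotal
  exact htotal.symm

end Calculus

theorem sum_prod_erase_pos {ι R : Type*} [Fintype ι] [DecidableEq ι] [Nonempty ι]
    [CommSemiring R] [PartialOrder R] [IsStrictOrderedRing R] {a : ι → R}
    (ha : ∀ j, 0 ≤ a j) (hzero : {j | a j = 0}.Subsingleton) :
    0 < ∑ k, ∏ j ∈ univ.erase k, a j := by
  obtain ⟨k, hk⟩ : ∃ k, ∀ j ≠ k, a j ≠ 0 := by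
    by_cases h : ∃ k, a k = 0
    · obtain ⟨k, hk⟩ := h
      exact ⟨k, fun j hjk hj => hjk (hzero hj hk)⟩
    · exact ⟨Classical.arbitrary ι, fun j _ hj => h ⟨j, hj⟩⟩
  refine sum_pos' (fun i _ => prod_nonneg fun j _ => ha j) ⟨k, mem_univ k, ?_⟩
  exact prod_pos fun j hj => (ha j).lt_of_ne' (hk j (ne_of_mem_erase hj))

section Cardinal

variable {ι 𝕜 E : Type*} [Fintype ι] [DecidableEq ι]

def cardinalDenom [CommSemiring 𝕜] (α : ι → E → 𝕜) (u : E) : 𝕜 :=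
  ∑ k, ∏ j ∈ univ.erase k, α j u

noncomputable def cardinalFun [Field 𝕜] (α : ι → E → 𝕜) (i : ι) (u : E) : 𝕜 :=
  (∏ j ∈ univ.erase i, α j u) / cardinalDenom α u

theorem sum_cardinalFun [Field 𝕜] {α : ι → E → 𝕜} {u : E}
    (hS : cardinalDenom α u ≠ 0) : ∑ i, cardinalFun α i u = 1 := by
  simp only [cardinalFun, ← sum_div]
  exact div_self hS

theorem cardinalFun_eq_mul [Field 𝕜] (α : ι → E → 𝕜) {i l : ι} (hil : i ≠ l) :
    cardinalFun α i = fun u => α l u *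
      ((∏ j ∈ (univ.erase i).erase l, α j u) / cardinalDenom α u) := by
  funext u
  rw [cardinalFun, ← mul_prod_erase _ _ (mem_erase.mpr ⟨hil.symm, mem_univ l⟩), mul_div_assoc]

variable [NontriviallyNormedField 𝕜] [NormedAddCommGroup E] [NormedSpace 𝕜 E]
  {α : ι → E → 𝕜} {k : ℕ}

theorem contDiff_cardinalDenom {n : WithTop ℕ∞} (hα : ∀ j, ContDiff 𝕜 n (α j)) :
    ContDiff 𝕜 n (cardinalDenom α) :=
  ContDiff.sum fun _ _ => contDiff_prod fun j _ => hα j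

theorem contDiff_cardinalFun (hα : ∀ j, ContDiff 𝕜 k (α j))
    (hS : ∀ u, cardinalDenom α u ≠ 0) (i : ι) :
    ContDiff 𝕜 k (cardinalFun α i) :=
  (contDiff_prod fun j _ => hα j).div (contDiff_cardinalDenom hα) hS

theorem iteratedFDeriv_cardinalFun_eq_zero_of_ne (hα : ∀ j, ContDiff 𝕜 k (α j))
    (hS : ∀ u, cardinalDenom α u ≠ 0) {x : E} {l : ι}
    (hflat : ∀ b ≤ k, iteratedFDeriv 𝕜 b (α l) x = 0) {i : ι} (hil : i ≠ l) {b : ℕ}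
    (hb : b ≤ k) : iteratedFDeriv 𝕜 b (cardinalFun α i) x = 0 := by
  have hα' : ∀ j, ContDiff 𝕜 b (α j) := fun j => (hα j).of_le (Nat.cast_le.mpr hb)
  rw [cardinalFun_eq_mul α hil]
  exact iteratedFDeriv_mul_eq_zero_of_flat (hα' l)
    ((contDiff_prod fun j _ => hα' j).div (contDiff_cardinalDenom hα') hS)
    fun c hc => hflat c (hc.trans hb)

theorem iteratedFDeriv_cardinalFun_eq_zero (hα : ∀ j, ContDiff 𝕜 k (α j))
    (hS : ∀ u, cardinalDenom α u ≠ 0) {x : E} {l : ι}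
    (hflat : ∀ b ≤ k, iteratedFDeriv 𝕜 b (α l) x = 0) (i : ι) {b : ℕ} (hb0 : b ≠ 0)
    (hb : b ≤ k) : iteratedFDeriv 𝕜 b (cardinalFun α i) x = 0 := by
  rcases eq_or_ne i l with rfl | hil
  · refine iteratedFDeriv_eq_zero_of_sum_eq_const hb0
      (fun j => (contDiff_cardinalFun hα hS j).of_le (Nat.cast_le.mpr hb))
      (fun u => sum_cardinalFun (hS u)) fun j hj => ?_
    exact iteratedFDeriv_cardinalFun_eq_zero_of_ne hα hS hflat hj hb
  · exact iteratedFDeriv_cardinalFun_eq_zero_of_ne hα hS hflat hil hb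

end Cardinal

theorem cheney_cardinal_derivatives_vanish_general
    {m : ℕ} {n : ℕ} (k : ℕ)
    (z : Fin n → EuclideanSpace ℝ (Fin m)) (hz : Function.Injective z)
    (α : Fin n → EuclideanSpace ℝ (Fin m) → ℝ)
    (hα : ∀ j, ContDiff ℝ k (α j))
    (hα0 : ∀ j u, 0 ≤ α j u)
    (hαz : ∀ j, α j (z j) = 0)
    (hαpos : ∀ j u, u ≠ z j → 0 < α j u)
    (hαderiv : ∀ j, ∀ b : ℕ, 0 < b → b ≤ k →
      iteratedFDeriv ℝ b (α j) (z j) = 0)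
    (g : Fin n → EuclideanSpace ℝ (Fin m) → ℝ)
    (hg : ∀ i u, g i u =
      (∏ j ∈ univ.erase i, α j u) / (∑ k' , ∏ j ∈ univ.erase k', α j u)) :
    ∀ i l, ContDiffAt ℝ k (g i) (z l) ∧
      ∀ b : ℕ, 0 < b → b ≤ k → iteratedFDeriv ℝ b (g i) (z l) = 0 := by
  intro i l
  have : Nonempty (Fin n) := ⟨i⟩
  have hg : g = cardinalFun α := funext fun i => funext (hg i)
  have hzero : ∀ u j, α j u = 0 → u = z j := fun u j h =>
    not_not.mp fun hu => (hαpos j u hu).ne' h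
  have hS : ∀ u, cardinalDenom α u ≠ 0 := fun u =>
    (sum_prod_erase_pos (hα0 · u) fun j hj j' hj' =>
      hz ((hzero u j hj).symm.trans (hzero u j' hj'))).ne'
  have hflat : ∀ b ≤ k, iteratedFDeriv ℝ b (α l) (z l) = 0 := by
    intro b hb
    rcases Nat.eq_zero_or_pos b with rfl | hb0
    · exact norm_eq_zero.mp (by rw [norm_iteratedFDeriv_zero, hαz, norm_zero])
    · exact hαderiv l b hb0 hb
  subst hg
  exact ⟨(contDiff_cardinalFun hα hS i).contDiffAt, fun b hb0 hb =>
    iteratedFDeriv_cardinalFun_eq_zero hα hS hflat i hb0.ne' hb⟩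

theorem cheney_cardinal_derivatives_vanish
    {m : ℕ} {n : ℕ} (hn : 2 ≤ n) (k : ℕ)
    (z : Fin n → EuclideanSpace ℝ (Fin m)) (hz : Function.Injective z)
    (α : Fin n → EuclideanSpace ℝ (Fin m) → ℝ)
    (hα : ∀ j, ContDiff ℝ k (α j))
    (hα0 : ∀ j u, 0 ≤ α j u)
    (hαz : ∀ j, α j (z j) = 0)
    (hαpos : ∀ j u, u ≠ z j → 0 < α j u)
    (hαderiv : ∀ j, ∀ b : ℕ, 0 < b → b ≤ k →
      iteratedFDeriv ℝ b (α j) (z j) = 0)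
    (g : Fin n → EuclideanSpace ℝ (Fin m) → ℝ)
    (hg : ∀ i u, g i u =
      (∏ j ∈ univ.erase i, α j u) / (∑ k' , ∏ j ∈ univ.erase k', α j u)) :
    ∀ i l, ContDiffAt ℝ k (g i) (z l) ∧
      ∀ b : ℕ, 0 < b → b ≤ k → iteratedFDeriv ℝ b (g i) (z l) = 0 :=
  cheney_cardinal_derivatives_vanish_general k z hz α hα hα0 hαz hαpos hαderiv g hg
end
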